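/- arXiv:1305.5085 — 12 statements merged into one kernel-verified Lean document; each statement's English description precedes it below -/
import Mathlib

section
/- The poset F_1 = D_∞ ⊔ ω is not reversible: there exists an order-preserving bijection from F_1 to itself whose inverse is not order-preserving. -/
/-!
Take one point of the antichain and put it below the chain, shifting the chain up by one and
the rest of the antichain down by one. This bijection is monotone, because every map out of
an antichain is, but its inverse sends the comparable pair `0 < 1` of `ω` to a point of `D_∞`
and a point of `ω`, which are incomparable.
-/

/-- `D_∞`, the countably infinite antichain. -/
def Dinf : Type := ℕ

instance : PartialOrder Dinf where
  le a b := a = b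
  le_refl _ := rfl
  le_trans _ _ _ h₁ h₂ := Eq.trans h₁ h₂
  le_antisymm _ _ h _ := h

/-- `F₁ = D_∞ ⊔ ω`. -/
abbrev F1 : Type := Dinf ⊕ ℕ

theorem Monotone.sum_elim {α β γ : Type*} [Preorder α] [Preorder β] [Preorder γ]
    {f : α → γ} {g : β → γ} (hf : Monotone f) (hg : Monotone g) : Monotone (Sum.elim f g) := by
  rintro (a | a) (b | b) h
  · exact hf (Sum.inl_le_inl_iff.1 h)
  · exact absurd h Sum.not_inl_le_inr
  · exact absurd h Sum.not_inr_le_inl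
  · exact hg (Sum.inr_le_inr_iff.1 h)

theorem Dinf.monotone {β : Type*} [Preorder β] (f : Dinf → β) : Monotone f := by
  rintro a b rfl
  exact le_rfl

namespace F1

def shiftDown : Dinf → F1
  | Nat.zero => .inr 0
  | Nat.succ m => .inl m

def shift : F1 ≃ F1 where
  toFun := Sum.elim shiftDown (fun n => .inr (n + 1))
  invFun
    | .inl n => .inl (Nat.succ n)
    | .inr 0 => .inl Nat.zero
    | .inr (n + 1) => .inr n
  left_inv := by rintro ((_ | m) | n) <;> rfl
  right_inv := by rintro (n | (_ | n)) <;> rfl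

theorem monotone_shift : Monotone shift :=
  (Dinf.monotone _).sum_elim fun _ _ h => Sum.inr_le_inr_iff.2 (Nat.succ_le_succ h)

theorem not_monotone_shift_symm : ¬ Monotone shift.symm := fun h =>
  Sum.not_inl_le_inr (h (Sum.inr_le_inr_iff.2 zero_le_one : (.inr 0 : F1) ≤ .inr 1))

end F1

/-- The poset `F1` is not reversible. -/
theorem F1_not_reversible : ∃ f : F1 ≃ F1, Monotone f ∧ ¬ Monotone f.symm :=
  ⟨F1.shift, F1.monotone_shift, F1.not_monotone_shift_symm⟩
end

section
/- The poset F_2 = (D_1 ⊕ D_∞) ⊔ D_∞ is not reversible: there exists an order-preserving bijection from F_2 to itself whose inverse is not order-preserving. -/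
/-- `F₂ = (D₁ ⊕ D_∞) ⊔ D_∞`. -/
abbrev F2 : Type := (PUnit ⊕ₗ Dinf) ⊕ Dinf

def toD (n : ℕ) : Dinf := n
def ofD (n : Dinf) : ℕ := n

/-- The bijection: shift the left antichain up by one, move `0` of the right
antichain into the vacated slot, and shift the right antichain down. -/
def fwd : F2 → F2
  | .inl x => match ofLex x with
    | .inl u => .inl (toLex (.inl u))
    | .inr n => .inl (toLex (.inr (toD (ofD n + 1))))
  | .inr n => match ofD n with
    | 0 => .inl (toLex (.inr (toD 0)))
    | (m+1) => .inr (toD m)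

def bwd : F2 → F2
  | .inl x => match ofLex x with
    | .inl u => .inl (toLex (.inl u))
    | .inr n => match ofD n with
      | 0 => .inr (toD 0)
      | (m+1) => .inl (toLex (.inr (toD m)))
  | .inr n => .inr (toD (ofD n + 1))

lemma left_inv : Function.LeftInverse bwd fwd := by
  rintro ((u | n) | n)
  · rfl
  · rcases n with _ | m <;> rfl
  · rcases n with _ | m <;> rfl

lemma right_inv : Function.RightInverse bwd fwd := by
  rintro ((u | n) | n)
  · rfl
  · rcases n with _ | m <;> rfl
  · rfl

lemma mono_fwd : Monotone fwd := by
  rintro (x | n) (y | m) h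
  · cases h with
    | inl h =>
      cases h with
      | inl h => exact Sum.LiftRel.inl (Sum.Lex.inl h)
      | inr h => cases h; exact le_refl _
      | sep a b => exact Sum.LiftRel.inl (Sum.Lex.sep _ _)
  · cases h
  · cases h
  · cases h with
    | inr h => cases h; exact le_refl _

lemma not_mono_bwd : ¬ Monotone bwd := by
  intro h
  have h2 : (Sum.inl (toLex (Sum.inl PUnit.unit)) : F2) ≤ Sum.inl (toLex (Sum.inr (toD 0))) :=
    Sum.LiftRel.inl (Sum.Lex.sep _ _)
  have := h h2
  cases this

/-- The poset `F2` is not reversible. -/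
theorem F2_not_reversible : ∃ f : F2 ≃ F2, Monotone f ∧ ¬ Monotone f.symm := by
  exact ⟨⟨fwd, bwd, left_inv, right_inv⟩, mono_fwd, not_mono_bwd⟩
end

section
/- The poset F_3 = D_∞ ⊔ ⊔_{i=0}^{∞} (D_1 ⊕ D_1), the disjoint union of a countably infinite antichain with countably many two-element chains, is not reversible: there exists an order-preserving bijection from F_3 to itself whose inverse is not order-preserving. -/
/-- Forward map. -/
def myf : ℕ ⊕ (ℕ × Bool) → ℕ ⊕ (ℕ × Bool)
  | .inl 0 => .inr (0, false)
  | .inl 1 => .inr (0, true)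
  | .inl (n+2) => .inl n
  | .inr (n, b) => .inr (n+1, b)

/-- Inverse map. -/
def myg : ℕ ⊕ (ℕ × Bool) → ℕ ⊕ (ℕ × Bool)
  | .inl n => .inl (n+2)
  | .inr (0, false) => .inl 0
  | .inr (0, true) => .inl 1
  | .inr (n+1, b) => .inr (n, b)

def myE : (ℕ ⊕ (ℕ × Bool)) ≃ (ℕ ⊕ (ℕ × Bool)) where
  toFun := myf
  invFun := myg
  left_inv x := by
    rcases x with (_|_|n) | ⟨n, b⟩ <;> simp [myf, myg]
  right_inv x := by
    rcases x with n | ⟨(_|n), b⟩ <;> rcases b_eq : ‹_› <;> simp_all [myf, myg]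

/-- `F₃ = D_∞ ⊔ (countably many two-element chains)`. -/
abbrev F3 : Type := Dinf ⊕ (Dinf × Bool)

lemma dinf_le_iff {a b : Dinf} : a ≤ b ↔ a = b := Iff.rfl

/-- The poset `F3` is not reversible. -/
theorem F3_not_reversible : ∃ f : F3 ≃ F3, Monotone f ∧ ¬ Monotone f.symm := by
  refine ⟨myE, ?_, ?_⟩
  · intro x y hxy
    rcases x with a | ⟨a₁, a₂⟩ <;> rcases y with b | ⟨b₁, b₂⟩
    · have hab : a = b := by
        cases Sum.le_def.1 hxy with
        | inl h => exact h
      subst hab; exact le_refl _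
    · exact absurd (Sum.le_def.1 hxy) (by intro h; cases h)
    · exact absurd (Sum.le_def.1 hxy) (by intro h; cases h)
    · have hab : (a₁, a₂) ≤ (b₁, b₂) := by
        cases Sum.le_def.1 hxy with
        | inr h => exact h
      obtain ⟨h1, h2⟩ := Prod.le_def.1 hab
      have h1' : a₁ = b₁ := h1
      subst h1'
      have key : ∀ (x : Dinf), (Sum.inr (x, a₂) : F3) ≤ Sum.inr (x, b₂) :=
        fun x => Sum.le_def.2 (Sum.LiftRel.inr (Prod.le_def.2 ⟨le_refl x, h2⟩))
      exact key _
  · intro hmono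
    have h : (Sum.inr ((0 : ℕ), false) : F3) ≤ Sum.inr ((0 : ℕ), true) :=
      Sum.le_def.2 (Sum.LiftRel.inr (Prod.le_def.2 ⟨rfl, Bool.false_le true⟩))
    have h4 : (Sum.inl (0:ℕ) : F3) ≤ (Sum.inl (1:ℕ) : F3) := hmono h
    have h5 : (0 : ℕ) = 1 := by
      cases Sum.le_def.1 h4 with
      | inl h => exact h
    exact absurd h5 (by norm_num)
end

section
/- The poset F_4 = D_∞ ⊕ ω is not reversible: there exists an order-preserving bijection from F_4 to itself whose inverse is not order-preserving. -/
/-- `F₄ = D_∞ ⊕ ω`. -/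
abbrev F4 : Type := Dinf ⊕ₗ ℕ

def dd (n : ℕ) : Dinf := n
def nn (n : Dinf) : ℕ := n

def fFun : F4 → F4 := fun x =>
  match ofLex x with
  | Sum.inl n =>
      match nn n with
      | 0 => toLex (Sum.inr 0)
      | m+1 => toLex (Sum.inl (dd m))
  | Sum.inr k => toLex (Sum.inr (k+1))

def gFun : F4 → F4 := fun x =>
  match ofLex x with
  | Sum.inl n => toLex (Sum.inl (dd (nn n + 1)))
  | Sum.inr 0 => toLex (Sum.inl (dd 0))
  | Sum.inr (k+1) => toLex (Sum.inr k)

def fEquiv : F4 ≃ F4 where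
  toFun := fFun
  invFun := gFun
  left_inv := by
    rintro (n | k)
    · rcases n with _ | m <;> rfl
    · rfl
  right_inv := by
    rintro (n | k)
    · rfl
    · rcases k with _ | m <;> rfl

/-- The poset `F4` is not reversible. -/
theorem F4_not_reversible : ∃ f : F4 ≃ F4, Monotone f ∧ ¬ Monotone f.symm := by
  refine ⟨fEquiv, ?_, ?_⟩
  · rintro (a | a) (b | b) hab
    · have h : a = b := Sum.Lex.inl_le_inl_iff.mp hab
      subst h; exact le_refl _
    · show fFun (toLex (Sum.inl a)) ≤ fFun (toLex (Sum.inr b))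
      rcases a with _ | m
      · exact Sum.Lex.inr_le_inr_iff.mpr (Nat.zero_le _)
      · exact Sum.Lex.inl_le_inr _ _
    · exact absurd hab Sum.Lex.not_inr_le_inl
    · show fFun (toLex (Sum.inr a)) ≤ fFun (toLex (Sum.inr b))
      have h : a ≤ b := Sum.Lex.inr_le_inr_iff.mp hab
      exact Sum.Lex.inr_le_inr_iff.mpr (by omega)
  · intro h
    have hle : (toLex (Sum.inl (dd 0)) : F4) ≤ toLex (Sum.inr 0) :=
      Sum.Lex.inl_le_inr _ _
    have h2 := h hle
    have h3 : (dd 1) = (dd 0) := Sum.Lex.inl_le_inl_iff.mp h2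
    exact Nat.one_ne_zero (congrArg nn h3)
end

section
/- The poset F_5 = (D_1 ⊔ ω^d) ⊕ ω is not reversible: there exists an order-preserving bijection from F_5 to itself whose inverse is not order-preserving. -/
/-- `F₅ = (D₁ ⊔ ω^d) ⊕ ω`. -/
abbrev F5 : Type := (PUnit ⊕ ℕᵒᵈ) ⊕ₗ ℕ

private abbrev S : Type := (PUnit.{1} ⊕ ℕᵒᵈ) ⊕ ℕ

private def gaux : ℕ → S
  | 0 => .inr 0
  | k + 1 => .inl (.inr (OrderDual.toDual k))

private def gfun : S → S
  | .inl (.inl _) => .inl (.inl .unit)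
  | .inl (.inr k) => gaux (OrderDual.ofDual k)
  | .inr n => .inr (n + 1)

private def haux : ℕ → S
  | 0 => .inl (.inr (OrderDual.toDual 0))
  | n + 1 => .inr n

private def ginv : S → S
  | .inl (.inl _) => .inl (.inl .unit)
  | .inl (.inr k) => .inl (.inr (OrderDual.toDual (OrderDual.ofDual k + 1)))
  | .inr n => haux n

private def E : F5 ≃ F5 where
  toFun x := toLex (gfun (ofLex x))
  invFun x := toLex (ginv (ofLex x))
  left_inv x := by
    rcases x with (⟨⟩ | k) | n
    · rfl
    · show toLex (ginv (gfun ((Sum.inl (Sum.inr k) : (PUnit ⊕ ℕᵒᵈ) ⊕ ℕ)))) = _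
      obtain ⟨m, rfl⟩ : ∃ m : ℕ, OrderDual.toDual m = k := ⟨OrderDual.ofDual k, rfl⟩
      rcases m with _ | m <;> rfl
    · rfl
  right_inv x := by
    rcases x with (⟨⟩ | k) | n
    · rfl
    · rfl
    · show toLex (gfun (ginv ((Sum.inr n : (PUnit ⊕ ℕᵒᵈ) ⊕ ℕ)))) = _
      rcases n with _ | n <;> rfl

/-- The poset `F5` is not reversible. -/
theorem F5_not_reversible : ∃ f : F5 ≃ F5, Monotone f ∧ ¬ Monotone f.symm := by
  refine ⟨E, ?_, ?_⟩
  · intro a b h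
    rcases a with (⟨⟩ | k) | n <;> rcases b with (⟨⟩ | j) | m
    -- p ≤ p
    · exact le_refl _
    -- p ≤ ω^d j : impossible
    · exact absurd (Sum.lex_inl_inl.1 h) Sum.not_inl_le_inr
    -- p ≤ ω m
    · show (toLex (gfun (.inl (.inl PUnit.unit))) : F5) ≤ toLex (gfun (.inr m))
      exact Sum.Lex.sep _ _
    -- ω^d k ≤ p : impossible
    · exact absurd (Sum.lex_inl_inl.1 h) Sum.not_inr_le_inl
    -- ω^d k ≤ ω^d j
    · have hjk : k ≤ j := Sum.inr_le_inr_iff.1 (Sum.lex_inl_inl.1 h)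
      show (toLex (gfun (.inl (.inr k))) : F5) ≤ toLex (gfun (.inl (.inr j)))
      obtain ⟨kk, rfl⟩ : ∃ m : ℕ, OrderDual.toDual m = k := ⟨OrderDual.ofDual k, rfl⟩
      obtain ⟨jj, rfl⟩ : ∃ m : ℕ, OrderDual.toDual m = j := ⟨OrderDual.ofDual j, rfl⟩
      have hjk' : jj ≤ kk := hjk
      simp only [gfun]
      rcases jj with _ | j' <;> rcases kk with _ | k'
      · exact le_refl _
      · exact Sum.Lex.sep _ _
      · omega
      · refine Sum.Lex.inl (Sum.inr_le_inr_iff.2 ?_)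
        show (j' : ℕ) ≤ k'
        omega
    -- ω^d k ≤ ω m
    · show (toLex (gfun (.inl (.inr k))) : F5) ≤ toLex (gfun (.inr m))
      obtain ⟨kk, rfl⟩ : ∃ m : ℕ, OrderDual.toDual m = k := ⟨OrderDual.ofDual k, rfl⟩
      simp only [gfun]
      rcases kk with _ | k'
      · exact Sum.Lex.inr (Nat.zero_le _)
      · exact Sum.Lex.sep _ _
    -- ω n ≤ p : impossible
    · exact absurd h Sum.lex_inr_inl
    -- ω n ≤ ω^d j : impossible
    · exact absurd h Sum.lex_inr_inl
    -- ω n ≤ ω m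
    · have hnm : n ≤ m := Sum.lex_inr_inr.1 h
      exact Sum.Lex.inr (by omega)
  · intro hmono
    have h : (toLex (.inl (.inl PUnit.unit)) : F5) ≤ toLex (.inr 0) := Sum.Lex.sep _ _
    have h2 := hmono h
    have h3 : (toLex (.inl (.inl PUnit.unit)) : F5) ≤
        toLex (.inl (.inr (OrderDual.toDual 0))) := h2
    exact absurd (Sum.lex_inl_inl.1 h3) Sum.not_inl_le_inr
end

section
/- The poset F_6 = L ⊕ ω, where L is the poset on ℕ × {0,1} with (i,x) < (j,y) iff i > j, is not reversible: there exists an order-preserving bijection from F_6 to itself whose inverse is not order-preserving. -/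
/-- The poset `L` on `ℕ × {0,1}` with `(i,x) < (j,y)` iff `i > j`. -/
def L6 : Type := ℕ × Bool

/-- The order relation of `L6`. -/
def L6.le (a b : ℕ × Bool) : Prop := b.1 < a.1 ∨ a = b

instance : PartialOrder L6 where
  le := L6.le
  le_refl _ := Or.inr rfl
  le_trans a b c hab hbc := by
    rcases hab with h | h
    · rcases hbc with h' | h'
      · exact Or.inl (h'.trans h)
      · exact Or.inl (h' ▸ h)
    · rcases hbc with h' | h'
      · exact Or.inl (h ▸ h')
      · exact Or.inr (h.trans h')
  le_antisymm a b hab hba := by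
    rcases hab with h | h
    · rcases hba with h' | h'
      · exact absurd (h.trans h') (lt_irrefl _)
      · exact h'.symm
    · exact h

/-- `F₆ = L ⊕ ω`. -/
abbrev F6 : Type := L6 ⊕ₗ ℕ

/-! The two elements of the top level of `L` are incomparable, and there is room to make them
comparable: move every other level of `L` up one step, shift `ω` up by two, and send the top level
onto the chain `0 < 1` at the bottom of `ω`. This bijection of `F₆` is monotone, but its inverse
pulls `0 < 1` back to an incomparable pair. -/

theorem Sum.Lex.monotone_of {α β γ : Type*} [Preorder α] [Preorder β] [Preorder γ]
    {f : α ⊕ₗ β → γ} (hl : Monotone fun a => f (toLex (.inl a)))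
    (hr : Monotone fun b => f (toLex (.inr b)))
    (hlr : ∀ a b, f (toLex (.inl a)) ≤ f (toLex (.inr b))) : Monotone f := by
  rintro (a | b) (a' | b') h
  · exact hl (Sum.Lex.inl_le_inl_iff.1 h)
  · exact hlr a b'
  · exact absurd h Sum.Lex.not_inr_le_inl
  · exact hr (Sum.Lex.inr_le_inr_iff.1 h)

namespace L6

theorem le_iff {a b : L6} : a ≤ b ↔ b.1 < a.1 ∨ a = b := Iff.rfl

theorem not_le_of_fst_eq {a b : L6} (h : a.1 = b.1) (hne : a ≠ b) : ¬a ≤ b := by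
  rw [le_iff, h]
  exact fun h' => h'.elim (lt_irrefl _) hne

def shiftToF6 : L6 → F6
  | (0, b) => toLex (.inr b.toNat)
  | (i + 1, b) => toLex (.inl (i, b))

theorem shiftToF6_monotone : Monotone shiftToF6 := by
  rintro ⟨i, b⟩ ⟨j, c⟩ h
  rcases le_iff.1 h with hlt | heq
  · change j < i at hlt
    obtain ⟨i, rfl⟩ := Nat.exists_eq_add_one_of_ne_zero (Nat.ne_zero_of_lt hlt)
    rcases j with _ | j
    · exact Sum.Lex.inl_le_inr _ _
    · exact Sum.Lex.inl_le_inl_iff.2 (le_iff.2 (.inl (Nat.lt_of_succ_lt_succ hlt)))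
  · rw [heq]

end L6

namespace F6

def shift : F6 ≃ F6 where
  toFun x := Sum.elim L6.shiftToF6 (fun n => toLex (.inr (n + 2))) (ofLex x)
  invFun x := match ofLex x with
    | .inl (i, b) => toLex (.inl ((i + 1, b) : L6))
    | .inr 0 => toLex (.inl ((0, false) : L6))
    | .inr 1 => toLex (.inl ((0, true) : L6))
    | .inr (n + 2) => toLex (.inr n)
  left_inv := by
    rintro (⟨_ | _, _ | _⟩ | _) <;> rfl
  right_inv := by
    rintro (_ | _ | _ | _) <;> rfl

theorem shift_monotone : Monotone shift := by
  refine Sum.Lex.monotone_of L6.shiftToF6_monotone (fun m n h => ?_) fun a n => ?_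
  · exact Sum.Lex.inr_le_inr_iff.2 (Nat.add_le_add_right h 2)
  · rcases a with ⟨_ | i, b⟩
    · exact Sum.Lex.inr_le_inr_iff.2 (by cases b <;> simp)
    · exact Sum.Lex.inl_le_inr _ _

end F6

/-- The poset `F6` is not reversible. -/
theorem F6_not_reversible : ∃ f : F6 ≃ F6, Monotone f ∧ ¬ Monotone f.symm := by
  refine ⟨F6.shift, F6.shift_monotone, fun hmono => ?_⟩
  have h01 : (toLex (.inr 0) : F6) ≤ toLex (.inr 1) := Sum.Lex.inr_le_inr_iff.2 zero_le_one
  exact L6.not_le_of_fst_eq (a := (0, false)) (b := (0, true)) rfl (by rintro ⟨⟩)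
    (Sum.Lex.inl_le_inl_iff.1 (hmono h01))
end

section
/- The poset F_8, on the set {a_i : i ∈ ℤ} ∪ {b_i : i ∈ ℤ} where the a_i are pairwise incomparable, the b_i are pairwise incomparable, and a_i < b_j iff (i > 0 or j ≠ i), is not reversible: there exists an order-preserving bijection from F_8 to itself whose inverse is not order-preserving. -/
/-- `F₈`: on `{aᵢ : i ∈ ℤ} ∪ {bᵢ : i ∈ ℤ}` (encoded `Sum.inl i = aᵢ`,
`Sum.inr j = b_j`), the `aᵢ` pairwise incomparable, the `bᵢ` pairwise
incomparable, and `aᵢ < b_j` iff `i > 0` or `j ≠ i`. -/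
def F8 : Type := ℤ ⊕ ℤ

/-- The order relation of `F₈`. -/
def F8.le : F8 → F8 → Prop
  | Sum.inl i, Sum.inl i' => i = i'
  | Sum.inl i, Sum.inr j => 0 < i ∨ j ≠ i
  | Sum.inr _, Sum.inl _ => False
  | Sum.inr j, Sum.inr j' => j = j'

theorem F8.le_refl (x : F8) : F8.le x x := by cases x <;> simp [F8.le]
theorem F8.le_trans (x y z : F8) : F8.le x y → F8.le y z → F8.le x z := by
  cases x <;> cases y <;> cases z <;> simp [F8.le] <;> omega
theorem F8.le_antisymm (x y : F8) : F8.le x y → F8.le y x → x = y := by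
  cases x <;> cases y <;> simp [F8.le] <;> intro h h' <;> exact congrArg _ (by omega)

instance : PartialOrder F8 where
  le := F8.le
  le_refl := F8.le_refl
  le_trans := F8.le_trans
  le_antisymm := F8.le_antisymm

/-! Shifting both levels by `k ≥ 0` preserves every relation `aᵢ < bⱼ` (the condition
`0 < i ∨ j ≠ i` only gets weaker), but for `k > 0` it maps the incomparable pair `a₀, b₀`
onto the comparable pair `aₖ < bₖ`, so its inverse is not monotone. -/

namespace F8

def a (i : ℤ) : F8 := Sum.inl i

def b (j : ℤ) : F8 := Sum.inr j

@[elab_as_elim]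
theorem induction {p : F8 → Prop} (ha : ∀ i, p (a i)) (hb : ∀ j, p (b j)) (x : F8) : p x :=
  Sum.rec ha hb x

theorem a_le_a_iff (i i' : ℤ) : a i ≤ a i' ↔ i = i' := Iff.rfl

theorem a_le_b_iff (i j : ℤ) : a i ≤ b j ↔ 0 < i ∨ j ≠ i := Iff.rfl

theorem not_b_le_a (j i : ℤ) : ¬ b j ≤ a i := id

theorem b_le_b_iff (j j' : ℤ) : b j ≤ b j' ↔ j = j' := Iff.rfl

def shift (k : ℤ) : F8 ≃ F8 := Equiv.sumCongr (Equiv.addRight k) (Equiv.addRight k)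

theorem shift_a (k i : ℤ) : shift k (a i) = a (i + k) := rfl

theorem shift_b (k j : ℤ) : shift k (b j) = b (j + k) := rfl

theorem shift_symm_a (k i : ℤ) : (shift k).symm (a i) = a (i - k) := rfl

theorem shift_symm_b (k j : ℤ) : (shift k).symm (b j) = b (j - k) := rfl

theorem monotone_shift {k : ℤ} (hk : 0 ≤ k) : Monotone (shift k) := by
  intro x y
  induction x using F8.induction <;> induction y using F8.induction <;>
    simp only [shift_a, shift_b, a_le_a_iff, a_le_b_iff, not_b_le_a, b_le_b_iff,
      false_implies] <;> omega

theorem not_monotone_shift_symm {k : ℤ} (hk : 0 < k) : ¬ Monotone (shift k).symm := by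
  intro h
  have hak_le_bk : a k ≤ b k := (a_le_b_iff k k).2 (Or.inl hk)
  have ha0_le_b0 : a 0 ≤ b 0 := by
    simpa only [shift_symm_a, shift_symm_b, sub_self] using h hak_le_bk
  simp [a_le_b_iff] at ha0_le_b0

end F8

/-- The poset `F8` is not reversible. -/
theorem F8_not_reversible : ∃ f : F8 ≃ F8, Monotone f ∧ ¬ Monotone f.symm :=
  ⟨F8.shift 1, F8.monotone_shift zero_le_one, F8.not_monotone_shift_symm one_pos⟩
end

section
/- Let X be a poset, h : X → X an order-preserving bijection, and x ∈ X. If the set {h^{-k}(x) : k ∈ ℕ} contains an infinite strictly descending chain, then the set {h^{-k}(x) : k ∈ ℕ} ∩ {y ∈ X : y ≤ x} also contains an infinite strictly descending chain. -/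
lemma iterate_cancel_aux {X : Type*} (h : X ≃ X) : ∀ (a : ℕ) (z : X),
    (⇑h)^[a] ((⇑h.symm)^[a] z) = z := by
  intro a
  induction a with
  | zero => intro z; simp
  | succ a ih =>
    intro z
    rw [Function.iterate_succ_apply, Function.iterate_succ_apply' (f := ⇑h.symm)]
    rw [h.apply_symm_apply]
    exact ih z

/-- Lemma: if the backward iterates `{h⁻ᵏ x : k ∈ ℕ}` contain an infinite strictly
descending chain, then they contain one lying inside `{y | y ≤ x}`. -/
theorem descending_chain_below {X : Type*} [PartialOrder X]
    (h : X ≃ X) (hmono : Monotone h) (x : X)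
    (hchain : ∃ g : ℕ → X, StrictAnti g ∧ ∀ n : ℕ, ∃ k : ℕ, g n = (⇑h.symm)^[k] x) :
    ∃ g : ℕ → X, StrictAnti g ∧ ∀ n : ℕ, (∃ k : ℕ, g n = (⇑h.symm)^[k] x) ∧ g n ≤ x := by
  obtain ⟨g, hg, hgk⟩ := hchain
  choose k hk using hgk
  -- pick n0 minimizing k
  have hne : (Set.range k).Nonempty := ⟨k 0, 0, rfl⟩
  obtain ⟨n0, hn0⟩ := Nat.sInf_mem hne
  have hmin : ∀ m, k n0 ≤ k m := by
    intro m
    rw [hn0]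
    exact Nat.sInf_le ⟨m, rfl⟩
  have hstrict : StrictMono (⇑h) := hmono.strictMono_of_injective h.injective
  have hiter : StrictMono ((⇑h)^[k n0]) := hstrict.iterate (k n0)
  refine ⟨fun j => (⇑h)^[k n0] (g (n0 + 1 + j)), ?_, ?_⟩
  · exact hiter.comp_strictAnti (fun i j hij => hg (by omega))
  · intro j
    have hle : k n0 ≤ k (n0 + 1 + j) := hmin _
    constructor
    · refine ⟨k (n0 + 1 + j) - k n0, ?_⟩
      show (⇑h)^[k n0] (g (n0 + 1 + j)) = _
      rw [hk]
      have : k (n0 + 1 + j) = k n0 + (k (n0 + 1 + j) - k n0) := by omega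
      conv_lhs => rw [this]
      rw [Function.iterate_add_apply, iterate_cancel_aux]
    · have hlt : g (n0 + 1 + j) < g n0 := hg (by omega)
      have := hiter hlt
      rw [hk n0, iterate_cancel_aux] at this
      exact this.le
end

section
/- Let X be a poset, let A ⊆ X be a countably infinite antichain, and let C ⊆ X be a chain of order type ω (i.e., C = {c_0 < c_1 < c_2 < ...}). Assume c ≰ a for all a ∈ A and c ∈ C. Then A ∪ C contains a subset (with the induced order) that is order-isomorphic to F_1, to F_4, or to F_7. -/
/-- `F₇`: a chain `c₀ < c₁ < ⋯` (encoded `Sum.inr i = cᵢ`) together with pairwise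
incomparable elements `a₁, a₂, …` (encoded `Sum.inl j = a_{j+1}`), where
`a_j < c_i` iff `i ≥ j`, and no other comparabilities. -/
def F7 : Type := ℕ ⊕ ℕ

/-- The order relation of `F₇`: `a_{j+1} ≤ cᵢ` iff `i ≥ j + 1`. -/
def F7.le : F7 → F7 → Prop
  | Sum.inl j, Sum.inl j' => j = j'
  | Sum.inl j, Sum.inr i => j + 1 ≤ i
  | Sum.inr _, Sum.inl _ => False
  | Sum.inr i, Sum.inr i' => i ≤ i'

theorem F7.le_refl (x : F7) : F7.le x x := by cases x <;> simp [F7.le]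
theorem F7.le_trans (x y z : F7) : F7.le x y → F7.le y z → F7.le x z := by
  cases x <;> cases y <;> cases z <;> simp [F7.le] <;> omega
theorem F7.le_antisymm (x y : F7) : F7.le x y → F7.le y x → x = y := by
  cases x <;> cases y <;> simp [F7.le] <;> intro h h' <;> exact congrArg _ (by omega)

instance : PartialOrder F7 where
  le := F7.le
  le_refl := F7.le_refl
  le_trans := F7.le_trans
  le_antisymm := F7.le_antisymm

open Set Function

theorem Set.Infinite.exists_injective_seq {X : Type*} {s : Set X} (hs : s.Infinite) :
    ∃ a : ℕ → X, Injective a ∧ ∀ i, a i ∈ s :=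
  ⟨fun i => hs.natEmbedding s i, Subtype.val_injective.comp (hs.natEmbedding s).injective,
    fun i => (hs.natEmbedding s i).2⟩

theorem IsAntichain.le_iff_eq_of_injective {X ι : Type*} [Preorder X] {s : Set X}
    (hs : IsAntichain (· ≤ ·) s) {a : ι → X} (ha : Injective a) (has : ∀ i, a i ∈ s)
    (i j : ι) : a i ≤ a j ↔ i = j :=
  ⟨fun h => ha (hs.eq (has i) (has j) h), by rintro rfl; rfl⟩

section Copies

variable {X : Type*} [PartialOrder X] {a c : ℕ → X}

theorem exists_F1_copy (ha : ∀ i j, a i ≤ a j ↔ i = j) (hc : StrictMono c)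
    (hac : ∀ i j, ¬ a i ≤ c j) (hca : ∀ i j, ¬ c i ≤ a j) :
    ∃ S ⊆ range a ∪ range c, Nonempty (F1 ≃o S) := by
  let f : F1 ↪o X := .ofMapLEIff (Sum.elim a c) <| by
    rintro (i | i) (j | j)
    · exact (ha i j).trans (Sum.inl_le_inl_iff (α := Dinf)).symm
    · exact iff_of_false (hac i j) Sum.not_inl_le_inr
    · exact iff_of_false (hca i j) Sum.not_inr_le_inl
    · exact hc.le_iff_le.trans Sum.inr_le_inr_iff.symm
  exact ⟨_, (Set.Sum.elim_range a c).subset, ⟨f.orderIso⟩⟩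

theorem exists_F4_copy (ha : ∀ i j, a i ≤ a j ↔ i = j) (hc : StrictMono c)
    (hac : ∀ i j, a i ≤ c j) (hca : ∀ i j, ¬ c i ≤ a j) :
    ∃ S ⊆ range a ∪ range c, Nonempty (F4 ≃o S) := by
  let f : F4 ↪o X := .ofMapLEIff (Sum.elim a c ∘ ofLex) <| by
    rintro (i | i) (j | j)
    · exact (ha i j).trans (Sum.Lex.inl_le_inl_iff (α := Dinf)).symm
    · exact iff_of_true (hac i j) (Sum.Lex.inl_le_inr i j)
    · exact iff_of_false (hca i j) Sum.Lex.not_inr_le_inl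
    · exact hc.le_iff_le.trans Sum.Lex.inr_le_inr_iff.symm
  refine ⟨_, ?_, ⟨f.orderIso⟩⟩
  rw [← Set.Sum.elim_range]
  exact range_comp_subset_range _ _

theorem exists_F7_copy (ha : ∀ i j, a i ≤ a j ↔ i = j) (hc : StrictMono c)
    (hac : ∀ j i, a j ≤ c i ↔ j + 1 ≤ i) (hca : ∀ i j, ¬ c i ≤ a j) :
    ∃ S ⊆ range a ∪ range c, Nonempty (F7 ≃o S) := by
  let f : F7 ↪o X := .ofMapLEIff (Sum.elim a c) <| by
    rintro (j | i) (j' | i')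
    · exact ha j j'
    · exact hac j i'
    · exact iff_of_false (hca i j') id
    · exact hc.le_iff_le
  exact ⟨_, (Set.Sum.elim_range a c).subset, ⟨f.orderIso⟩⟩

end Copies

theorem exists_seq_le_chain_iff {X : Type*} [Preorder X] {c : ℕ → X} (hc : Monotone c)
    {A : Set X} (hA : {x ∈ A | ∃ n, x ≤ c n}.Infinite)
    (hfin : ∀ n, {x ∈ A | x ≤ c n}.Finite) :
    ∃ (a : ℕ → X) (M : ℕ → ℕ), Injective a ∧ StrictMono M ∧ (∀ j, a j ∈ A) ∧
      ∀ j i, a j ≤ c (M i) ↔ j + 1 ≤ i := by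
  set A' := {x ∈ A | ∃ n, x ≤ c n}
  set idx : X → ℕ := fun x => sInf {n | x ≤ c n}
  have hidx : ∀ x ∈ A', ∀ m, x ≤ c m ↔ idx x ≤ m := fun x hx m =>
    ⟨fun h => Nat.sInf_le h, fun h => le_trans (Nat.sInf_mem hx.2) (hc h)⟩
  set D := insert 0 (idx '' A')
  have hD : D.Infinite := by
    refine (infinite_of_not_bddAbove fun ⟨N, hN⟩ => hA ((hfin N).subset ?_)).mono
      (subset_insert _ _)
    exact fun x hx => ⟨hx.1, (hidx x hx N).2 (hN (mem_image_of_mem _ hx))⟩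
  set M := Nat.nth (· ∈ D)
  have hM : StrictMono M := Nat.nth_strictMono hD
  have hM0 : M 0 = 0 := Nat.nth_zero_of_zero (mem_insert _ _)
  have hMD : ∀ j, ∃ x ∈ A', idx x = M (j + 1) := fun j => by
    rcases Nat.nth_mem_of_infinite hD (j + 1) with h | h
    · have hpos := hM (Nat.succ_pos j)
      rw [hM0] at hpos
      exact absurd h hpos.ne'
    · exact h
  choose a haA' ha using hMD
  refine ⟨a, M, fun j j' h => ?_, hM, fun j => (haA' j).1, fun j i => ?_⟩
  · have h' := congrArg idx h
    rw [ha, ha] at h'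
    exact Nat.succ_injective (hM.injective h')
  · rw [hidx _ (haA' j), ha, hM.le_iff_le]

theorem antichain_chain_contains_copy_general {X : Type*} [PartialOrder X]
    (A : Set X) (hAinf : A.Infinite)
    (hA : IsAntichain (· ≤ ·) A)
    (c : ℕ → X) (hc : StrictMono c)
    (hCA : ∀ a ∈ A, ∀ n : ℕ, ¬ c n ≤ a) :
    ∃ S : Set X, S ⊆ A ∪ Set.range c ∧
      (Nonempty (F1 ≃o ↥S) ∨ Nonempty (F4 ≃o ↥S) ∨ Nonempty (F7 ≃o ↥S)) := by
  by_cases hB : {x ∈ A | ∀ n, ¬ x ≤ c n}.Infinite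
  · obtain ⟨a, ha, haB⟩ := hB.exists_injective_seq
    obtain ⟨S, hS, hF1⟩ := exists_F1_copy (hA.le_iff_eq_of_injective ha fun i => (haB i).1) hc
      (fun i n => (haB i).2 n) (fun n i => hCA _ (haB i).1 n)
    exact ⟨S, hS.trans (union_subset_union_left _ (range_subset_iff.2 fun i => (haB i).1)),
      Or.inl hF1⟩
  by_cases hN : ∃ n, {x ∈ A | x ≤ c n}.Infinite
  · obtain ⟨n, hn⟩ := hN
    obtain ⟨a, ha, haN⟩ := hn.exists_injective_seq
    obtain ⟨S, hS, hF4⟩ := exists_F4_copy (c := fun m => c (n + m))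
      (hA.le_iff_eq_of_injective ha fun i => (haN i).1) (hc.comp (strictMono_id.const_add n))
      (fun i m => (haN i).2.trans (hc.monotone (Nat.le_add_right n m)))
      (fun m i => hCA _ (haN i).1 _)
    refine ⟨S, hS.trans (union_subset_union (range_subset_iff.2 fun i => (haN i).1) ?_),
      Or.inr (Or.inl hF4)⟩
    exact range_subset_iff.2 fun m => mem_range_self _
  push Not at hN
  have hbelow : {x ∈ A | ∃ n, x ≤ c n}.Infinite :=
    (hAinf.sdiff (not_infinite.1 hB)).mono fun x hx => ⟨hx.1, by simpa [hx.1] using hx.2⟩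
  obtain ⟨a, M, ha, hM, haA, hac⟩ := exists_seq_le_chain_iff hc.monotone hbelow hN
  obtain ⟨S, hS, hF7⟩ := exists_F7_copy (hA.le_iff_eq_of_injective ha haA) (hc.comp hM) hac
    (fun i j => hCA _ (haA j) _)
  refine ⟨S, hS.trans (union_subset_union (range_subset_iff.2 haA) ?_), Or.inr (Or.inr hF7)⟩
  exact range_comp_subset_range _ _

/-- Lemma: if `A` is a countably infinite antichain and `C = {c₀ < c₁ < ⋯}` a chain of
order type `ω` with `c ≰ a` for all `a ∈ A`, `c ∈ C`, then `A ∪ C` contains a subset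
isomorphic to `F₁`, `F₄` or `F₇`. -/
theorem antichain_chain_contains_copy {X : Type*} [PartialOrder X]
    (A : Set X) (hAinf : A.Infinite) (hAcount : A.Countable)
    (hA : IsAntichain (· ≤ ·) A)
    (c : ℕ → X) (hc : StrictMono c)
    (hCA : ∀ a ∈ A, ∀ n : ℕ, ¬ c n ≤ a) :
    ∃ S : Set X, S ⊆ A ∪ Set.range c ∧
      (Nonempty (F1 ≃o ↥S) ∨ Nonempty (F4 ≃o ↥S) ∨ Nonempty (F7 ≃o ↥S)) :=
  antichain_chain_contains_copy_general A hAinf hA c hc hCA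
end

section
/- Let X be a poset that can be partitioned into two sets A = {a_0 > a_1 > a_2 > ...} and B = {b_0 > b_1 > b_2 > ...}, each order-isomorphic to ω^d (an infinite strictly descending chain), such that a_i and b_i are incomparable in X for every i ∈ ℕ. Then there exists a subset C ⊆ X such that the linear sum C ⊕ ω (C with the induced order, with a chain of order type ω placed above it) is order-isomorphic to F_5 or to F_6. -/
/-!
If some `aᵢ` lies above no `bⱼ`, then `aᵢ` is incomparable with the whole tail
`bᵢ > bᵢ₊₁ > ⋯` (it is not below `bᵢ`, hence not below anything smaller), and these points form
`D₁ ⊔ ω^d`, giving `F₅`; symmetrically with `a` and `b` exchanged. Otherwise every point of either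
chain lies above some point of the other, so one can pick indices `n₀ < n₁ < ⋯` such that both
points of level `k + 1` lie below both points of level `k`; the levels `{a (n k), b (n k)}` then
form a copy of `L`, giving `F₆`.
-/

section

variable {X : Type*}

theorem exists_sumLex_orderIso_of_orderEmbedding [LE X] {α : Type*} [LE α] (f : α ↪o X) :
    ∃ C : Set X, Nonempty ((C ⊕ₗ ℕ) ≃o (α ⊕ₗ ℕ)) :=
  ⟨Set.range f, ⟨OrderEmbedding.orderIso.symm.sumLexCongr (OrderIso.refl ℕ)⟩⟩

variable [Preorder X]

def OrderEmbedding.sumElim {α β : Type*} [PartialOrder α] [PartialOrder β] (f : α ↪o X)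
    (g : β ↪o X) (h : ∀ a b, ¬ f a ≤ g b ∧ ¬ g b ≤ f a) : α ⊕ β ↪o X :=
  OrderEmbedding.ofMapLEIff (Sum.elim f g) <| by
    rintro (a | a) (b | b) <;> simp [h]

theorem exists_sumLex_orderIso_F5 {x : X} {c : ℕ → X} (hc : StrictAnti c) {i : ℕ}
    (hxi : ¬ x ≤ c i) (hbelow : ∀ j, ¬ c j ≤ x) :
    ∃ C : Set X, Nonempty ((C ⊕ₗ ℕ) ≃o F5) := by
  have hinc (k : ℕ) : ¬ x ≤ c (i + k) ∧ ¬ c (i + k) ≤ x :=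
    ⟨fun h => hxi (h.trans (hc.antitone (Nat.le_add_right i k))), hbelow _⟩
  have hchain : StrictAnti fun k => c (i + k) := fun _ _ h => hc (Nat.add_lt_add_left h i)
  exact exists_sumLex_orderIso_of_orderEmbedding <| OrderEmbedding.sumElim
    (OrderEmbedding.ofMapLEIff (fun _ : PUnit => x) fun _ _ => by simp)
    (OrderEmbedding.ofStrictMono _ hchain.dual_left) fun _ k => hinc k

def L6.orderEmbedding (f : ℕ × Bool → X) (hstep : ∀ k x y, f (k + 1, x) ≤ f (k, y))
    (hinc : ∀ k x, ¬ f (k, x) ≤ f (k, !x)) : L6 ↪o X :=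
  have hlt {k m : ℕ} (hmk : m < k) (x y : Bool) : f (k, x) ≤ f (m, y) :=
    (antitone_nat_of_succ_le (f := fun j => f (j, x)) (fun j => hstep j x x) hmk).trans
      (hstep m x y)
  OrderEmbedding.ofMapLEIff f <| by
    rintro ⟨k, x⟩ ⟨m, y⟩
    change _ ↔ m < k ∨ (k, x) = (m, y)
    refine ⟨fun h => ?_, ?_⟩
    · rcases lt_trichotomy m k with hmk | rfl | hkm
      · exact Or.inl hmk
      · cases x <;> cases y <;> simp_all
      · exact absurd ((hlt hkm (!y) x).trans h) (by simpa using hinc m (!y))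
    · rintro (hmk | h)
      · exact hlt hmk x y
      · rw [h]

theorem exists_strictMono_interleaving {a b : ℕ → X} (ha : Antitone a) (hb : Antitone b)
    (hab : ∀ i, ∃ j, b j ≤ a i) (hba : ∀ i, ∃ j, a j ≤ b i) :
    ∃ n : ℕ → ℕ, StrictMono n ∧ ∀ k, b (n (k + 1)) ≤ a (n k) ∧ a (n (k + 1)) ≤ b (n k) := by
  have hnext (i : ℕ) : ∃ j, i < j ∧ b j ≤ a i ∧ a j ≤ b i := by
    obtain ⟨j₁, h₁⟩ := hab i
    obtain ⟨j₂, h₂⟩ := hba i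
    exact ⟨max (i + 1) (max j₁ j₂), by omega, (hb (by omega)).trans h₁, (ha (by omega)).trans h₂⟩
  choose g hg using hnext
  refine ⟨fun k => g^[k] 0, strictMono_nat_of_lt_succ fun k => ?_, fun k => ?_⟩ <;>
    simp only [Function.iterate_succ_apply']
  exacts [(hg _).1, (hg _).2]

theorem exists_sumLex_orderIso_F6 {a b : ℕ → X} (ha : Antitone a) (hb : Antitone b)
    (hinc : ∀ i, ¬ a i ≤ b i ∧ ¬ b i ≤ a i)
    (hab : ∀ i, ∃ j, b j ≤ a i) (hba : ∀ i, ∃ j, a j ≤ b i) :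
    ∃ C : Set X, Nonempty ((C ⊕ₗ ℕ) ≃o F6) := by
  obtain ⟨n, hn, hstep⟩ := exists_strictMono_interleaving ha hb hab hba
  refine exists_sumLex_orderIso_of_orderEmbedding <|
    L6.orderEmbedding (fun p => bif p.2 then b (n p.1) else a (n p.1)) ?_ ?_
  · have hsucc (k : ℕ) : n k ≤ n (k + 1) := (hn k.lt_succ_self).le
    rintro k (_ | _) (_ | _)
    exacts [ha (hsucc k), (hstep k).2, (hstep k).1, hb (hsucc k)]
  · rintro k (_ | _)
    exacts [(hinc (n k)).1, (hinc (n k)).2]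

end

theorem two_chains_give_F5_or_F6_general {X : Type*} [PartialOrder X]
    (a b : ℕ → X) (ha : StrictAnti a) (hb : StrictAnti b)
    (hinc : ∀ i : ℕ, ¬ a i ≤ b i ∧ ¬ b i ≤ a i) :
    ∃ C : Set X, Nonempty ((↥C ⊕ₗ ℕ) ≃o F5) ∨ Nonempty ((↥C ⊕ₗ ℕ) ≃o F6) := by
  by_cases hA : ∃ i, ∀ j, ¬ b j ≤ a i
  · obtain ⟨i, hi⟩ := hA
    obtain ⟨C, hC⟩ := exists_sumLex_orderIso_F5 hb (hinc i).1 hi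
    exact ⟨C, Or.inl hC⟩
  by_cases hB : ∃ i, ∀ j, ¬ a j ≤ b i
  · obtain ⟨i, hi⟩ := hB
    obtain ⟨C, hC⟩ := exists_sumLex_orderIso_F5 ha (hinc i).2 hi
    exact ⟨C, Or.inl hC⟩
  push Not at hA hB
  obtain ⟨C, hC⟩ := exists_sumLex_orderIso_F6 ha.antitone hb.antitone hinc hA hB
  exact ⟨C, Or.inr hC⟩

/-- Lemma: if `X` is partitioned into two descending chains `A = {a₀ > a₁ > ⋯}` and
`B = {b₀ > b₁ > ⋯}` with `aᵢ` and `bᵢ` incomparable for all `i`, then there is a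
subset `C ⊆ X` with `C ⊕ ω` isomorphic to `F₅` or `F₆`. -/
theorem two_chains_give_F5_or_F6 {X : Type*} [PartialOrder X]
    (a b : ℕ → X) (ha : StrictAnti a) (hb : StrictAnti b)
    (hcover : ∀ x : X, (∃ i : ℕ, x = a i) ∨ (∃ i : ℕ, x = b i))
    (hdisj : ∀ i j : ℕ, a i ≠ b j)
    (hinc : ∀ i : ℕ, ¬ a i ≤ b i ∧ ¬ b i ≤ a i) :
    ∃ C : Set X, Nonempty ((↥C ⊕ₗ ℕ) ≃o F5) ∨ Nonempty ((↥C ⊕ₗ ℕ) ≃o F6) :=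
  two_chains_give_F5_or_F6_general a b ha hb hinc
end

section
/- Let (P,≤) be a preordered set and let 𝒜_≤ be the Alexandroff topology on P (open sets are exactly the up-sets of P). Then the topological space (P, 𝒜_≤) is hereditarily reversible if and only if (P,≤) is a hereditarily reversible preorder. -/
/-- A preordered set is *reversible* if every order-preserving bijection of it
onto itself has order-preserving inverse. -/
def Reversible (P : Type*) [Preorder P] : Prop :=
  ∀ f : P ≃ P, Monotone f → Monotone f.symm

/-- A topological space is *reversible* if every continuous bijection of it
onto itself is a homeomorphism. -/
def TopReversible (X : Type*) [TopologicalSpace X] : Prop :=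
  ∀ f : X ≃ X, Continuous f → Continuous f.symm

/-- The Alexandroff topology of a preorder: open sets are exactly the up-sets. -/
def alexandrovTopology (P : Type*) [Preorder P] : TopologicalSpace P where
  IsOpen s := IsUpperSet s
  isOpen_univ := isUpperSet_univ
  isOpen_inter _ _ := IsUpperSet.inter
  isOpen_sUnion _ h := isUpperSet_sUnion h

/-- The Alexandroff space of a preorder is hereditarily reversible (every subspace is
reversible) iff the preorder is hereditarily reversible (every subset with the induced
preorder is reversible). -/
theorem alexandrov_hereditarily_reversible_iff (P : Type*) [Preorder P] :
    (∀ S : Set P,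
        @TopReversible S (TopologicalSpace.induced Subtype.val (alexandrovTopology P))) ↔
      ∀ S : Set P, Reversible S := by
  have hind : ∀ S : Set P,
      TopologicalSpace.induced Subtype.val (alexandrovTopology P) = alexandrovTopology S := by
    intro S
    ext s
    constructor
    · rintro ⟨U, hU, rfl⟩
      intro a b hab ha
      exact hU hab ha
    · intro hs
      refine ⟨{x | ∃ a : S, a ∈ s ∧ (a : P) ≤ x}, ?_, ?_⟩
      · rintro x y hxy ⟨a, ha, hax⟩
        exact ⟨a, ha, hax.trans hxy⟩
      · ext b
        simp only [Set.mem_preimage, Set.mem_setOf_eq]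
        constructor
        · rintro ⟨a, ha, hab⟩
          exact hs (show a ≤ b from hab) ha
        · intro hb; exact ⟨b, hb, le_refl _⟩
  have hcm : ∀ (A B : Type _) [Preorder A] [Preorder B] (f : A → B),
      @Continuous A B (alexandrovTopology A) (alexandrovTopology B) f ↔ Monotone f := by
    intro A B _ _ f
    letI := alexandrovTopology A
    letI := alexandrovTopology B
    constructor
    · intro hc a b hab
      have h : IsUpperSet (f ⁻¹' Set.Ici (f a)) :=
        hc.isOpen_preimage (Set.Ici (f a)) (fun x y hxy hx => hx.trans hxy)
      exact h hab (le_refl (f a))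
    · intro hm
      exact ⟨fun U hU => fun x y hxy hx => hU (hm hxy) hx⟩
  constructor
  · intro h S f hf
    have := h S f
    rw [hind S] at this
    exact (hcm S S f.symm).mp (this ((hcm S S f).mpr hf))
  · intro h S
    rw [hind S]
    intro f hf
    exact (hcm S S f.symm).mpr (h S f ((hcm S S f).mp hf))
end

section
/- Let (X,τ) be a topological space such that the specialization preorder ≤_τ of X is a partial order that is partially well ordered (i.e., well-founded and without infinite antichains), or such that the dual of ≤_τ is a partially well ordered partial order. Then (X,τ) is hereditarily reversible: for every subspace A ⊆ X, every continuous bijection from A to itself is a homeomorphism. -/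
/-!
A continuous self-map is monotone for the specialization order, in which open sets are up-sets
and closed sets are down-sets. In a partially well ordered set every point `y` of a monotone
bijection `f` is periodic: a backward orbit yields `f^[e] y ≤ y` and a forward orbit
`y ≤ f^[d] y` (after moving `y` along its orbit), whence `f^[d * e] y = y`. An up-set `U` is the
up-closure of its finitely many minimal elements, so a common period `N` of these gives
`f^[N] '' U ⊆ U`, which periodicity upgrades to `f^[N] ⁻¹' U = U`. Then
`f.symm ⁻¹' U = f^[N - 1] ⁻¹' U` is open. The dual case runs the same argument on closed sets.
-/

open Function Set

theorem Set.MapsTo.preimage_eq_of_forall_mem_periodicPts {α : Type*} {g : α → α} {S : Set α}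
    (hS : MapsTo g S S) (hg : ∀ x, x ∈ periodicPts g) : g ⁻¹' S = S := by
  refine Subset.antisymm (fun x hx => ?_) hS
  obtain ⟨n, hn, hx_per⟩ := hg x
  obtain ⟨k, rfl⟩ := Nat.exists_eq_add_one_of_ne_zero hn.ne'
  rw [← hx_per.eq, iterate_succ_apply]
  exact hS.iterate k hx

section PartialOrder

variable {α : Type*} [PartialOrder α] {f : α → α}

theorem Monotone.isPeriodicPt_mul_of_le_iterate_of_iterate_le (hf : Monotone f) {x : α} {d e : ℕ}
    (hd : x ≤ f^[d] x) (he : f^[e] x ≤ x) : IsPeriodicPt f (d * e) x := by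
  refine le_antisymm ?_ ?_
  · rw [mul_comm, iterate_mul]
    exact (hf.iterate e).antitone_iterate_of_map_le he (Nat.zero_le d)
  · rw [iterate_mul]
    exact (hf.iterate d).monotone_iterate_of_le_map hd (Nat.zero_le e)

variable [WellQuasiOrderedLE α]

theorem Monotone.exists_iterate_le_of_surjective (hf : Monotone f) (hs : Surjective f) (x : α) :
    ∃ e, 0 < e ∧ f^[e] x ≤ x := by
  choose y hy using fun n => hs.iterate n x
  obtain ⟨p, k, hpk, hle⟩ := wellQuasiOrdered_le y
  refine ⟨k - p, by omega, ?_⟩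
  calc f^[k - p] x = f^[k] (y p) := by rw [← hy p, ← iterate_add_apply, Nat.sub_add_cancel hpk.le]
    _ ≤ f^[k] (y k) := hf.iterate k hle
    _ = x := hy k

theorem Monotone.mem_periodicPts_of_bijective (hf : Monotone f) (hb : Bijective f) (x : α) :
    x ∈ periodicPts f := by
  obtain ⟨p, k, hpk, hle⟩ := wellQuasiOrdered_le fun n => f^[n] x
  have hd : f^[p] x ≤ f^[k - p] (f^[p] x) := by
    rwa [← iterate_add_apply, Nat.sub_add_cancel hpk.le]
  obtain ⟨e, he, hle'⟩ := hf.exists_iterate_le_of_surjective hb.2 (f^[p] x)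
  refine mk_mem_periodicPts (n := (k - p) * e) (Nat.mul_pos (by omega) he) ?_
  apply hb.1.iterate p
  have := (hf.isPeriodicPt_mul_of_le_iterate_of_iterate_le hd hle').eq
  rwa [← iterate_add_apply, Nat.add_comm, iterate_add_apply] at this

theorem IsUpperSet.exists_iterate_preimage_eq (hf : Monotone f) (hb : Bijective f) {S : Set α}
    (hS : IsUpperSet S) : ∃ N, 0 < N ∧ f^[N] ⁻¹' S = S := by
  have hper := hf.mem_periodicPts_of_bijective hb
  set M := {m | Minimal (· ∈ S) m}
  have hM : M.Finite := WellQuasiOrderedLE.finite_of_isAntichain (setOfPred_minimal_antichain _)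
  set N := ∏ m ∈ hM.toFinset, minimalPeriod f m
  have hN : ∀ m ∈ M, f^[N] m = m := fun m hm =>
    (isPeriodicPt_minimalPeriod f m).trans_dvd (Finset.dvd_prod_of_mem _ (hM.mem_toFinset.2 hm))
  have hmaps : MapsTo f^[N] S S := fun x hx => by
    obtain ⟨m, hmx, hm⟩ := exists_minimal_le_of_wellFoundedLT _ x hx
    exact hS (hN m hm ▸ hf.iterate N hmx) hm.prop
  refine ⟨N, Finset.prod_pos fun m _ => minimalPeriod_pos_of_mem_periodicPts (hper m), ?_⟩
  exact hmaps.preimage_eq_of_forall_mem_periodicPts fun x =>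
    ⟨_, minimalPeriod_pos_of_mem_periodicPts (hper x), (isPeriodicPt_minimalPeriod f x).iterate N⟩

end PartialOrder

theorem OrderEmbedding.wellQuasiOrderedLE {α β : Type*} [LE α] [LE β] [WellQuasiOrderedLE β]
    (e : α ↪o β) : WellQuasiOrderedLE α :=
  ⟨fun s => by
    obtain ⟨m, n, hmn, hle⟩ := wellQuasiOrdered_le (e ∘ s)
    exact ⟨m, n, hmn, e.map_rel_iff.1 hle⟩⟩

theorem Equiv.continuous_symm_of_iterate_preimage_eq {Y : Type*} [TopologicalSpace Y] (f : Y ≃ Y)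
    (hf : Continuous f) (h : ∀ U : Set Y, IsOpen U → ∃ N, 0 < N ∧ f^[N] ⁻¹' U = U) :
    Continuous f.symm := by
  refine continuous_def.2 fun U hU => ?_
  obtain ⟨N, hN, hU_inv⟩ := h U hU
  obtain ⟨k, rfl⟩ := Nat.exists_eq_add_one_of_ne_zero hN.ne'
  have : f.symm ⁻¹' U = f^[k] ⁻¹' U := by
    conv_lhs => rw [← hU_inv]
    rw [← preimage_comp, iterate_succ, comp_assoc, f.self_comp_symm, comp_id]
  exact this ▸ hU.preimage (hf.iterate k)

namespace Specialization

variable {X : Type*} [TopologicalSpace X]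

theorem le_iff_mem_closure {a b : Specialization X} : a ≤ b ↔ ofEquiv a ∈ closure {ofEquiv b} :=
  specializes_iff_mem_closure

def subtypeEmbedding [T0Space X] (A : Set X) : Specialization A ↪o Specialization X :=
  OrderEmbedding.ofMapLEIff (toEquiv ∘ Subtype.val ∘ ofEquiv) fun _ _ =>
    Topology.IsInducing.subtypeVal.specializes_iff

theorem wellQuasiOrderedLE_of_wellFounded
    (hwf : WellFounded fun x y : X => x ∈ closure {y} ∧ x ≠ y)
    (hfin : ∀ A : Set X, IsAntichain (fun x y : X => x ∈ closure {y}) A → A.Finite) :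
    WellQuasiOrderedLE (Specialization X) :=
  wellQuasiOrderedLE_iff.2
    ⟨⟨hwf.mono fun _ _ h => ⟨le_iff_mem_closure.1 h.le, h.ne⟩⟩,
      fun A hA => hfin A (hA.mono fun _ _ => le_iff_mem_closure.2)⟩

theorem wellQuasiOrderedLE_orderDual_of_wellFounded
    (hwf : WellFounded fun x y : X => y ∈ closure {x} ∧ x ≠ y)
    (hfin : ∀ A : Set X, IsAntichain (fun x y : X => x ∈ closure {y}) A → A.Finite) :
    WellQuasiOrderedLE (Specialization X)ᵒᵈ :=
  wellQuasiOrderedLE_iff.2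
    ⟨⟨hwf.mono fun _ _ h => ⟨le_iff_mem_closure.1 h.le, h.ne⟩⟩,
      fun A hA => hfin A (hA.swap.mono fun _ _ => le_iff_mem_closure.2)⟩

end Specialization

section T0Space

variable {Y : Type*} [TopologicalSpace Y] [T0Space Y]

theorem Equiv.continuous_symm_of_wellQuasiOrderedLE_specialization
    [WellQuasiOrderedLE (Specialization Y)] (f : Y ≃ Y) (hf : Continuous f) :
    Continuous f.symm :=
  f.continuous_symm_of_iterate_preimage_eq hf fun _ hU =>
    IsUpperSet.exists_iterate_preimage_eq (α := Specialization Y) hf.specialization_monotone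
      f.bijective hU.stableUnderGeneralization

theorem Equiv.continuous_symm_of_wellQuasiOrderedLE_specialization_orderDual
    [WellQuasiOrderedLE (Specialization Y)ᵒᵈ] (f : Y ≃ Y) (hf : Continuous f) :
    Continuous f.symm :=
  f.continuous_symm_of_iterate_preimage_eq hf fun U hU => by
    have hUc : IsUpperSet (α := (Specialization Y)ᵒᵈ) Uᶜ :=
      IsLowerSet.toDual (α := Specialization Y) hU.isClosed_compl.stableUnderSpecialization
    obtain ⟨N, hN, hUc_inv⟩ := hUc.exists_iterate_preimage_eq
      (Monotone.dual (α := Specialization Y) (β := Specialization Y) hf.specialization_monotone)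
      f.bijective
    exact ⟨N, hN, compl_inj_iff.1 hUc_inv⟩

end T0Space

/-- A topological space whose specialization preorder `x ≤ y ↔ x ∈ closure {y}` (or its
dual) is a partially well ordered partial order is hereditarily reversible. -/
theorem hereditarily_reversible_of_pwo_specialization {X : Type*} [TopologicalSpace X]
    (hantisymm : ∀ x y : X, x ∈ closure {y} → y ∈ closure {x} → x = y)
    (hpwo :
      (WellFounded (fun x y : X => x ∈ closure {y} ∧ x ≠ y) ∧
          ∀ A : Set X, IsAntichain (fun x y : X => x ∈ closure {y}) A → A.Finite) ∨
        (WellFounded (fun x y : X => y ∈ closure {x} ∧ x ≠ y) ∧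
          ∀ A : Set X, IsAntichain (fun x y : X => x ∈ closure {y}) A → A.Finite)) :
    ∀ A : Set X, ∀ f : A ≃ A, Continuous f → Continuous f.symm := by
  intro A f hf
  have : T0Space X := (t0Space_iff_inseparable X).2 fun x y h =>
    hantisymm x y (specializes_iff_mem_closure.1 h.specializes')
      (specializes_iff_mem_closure.1 h.specializes)
  rcases hpwo with ⟨hwf, hfin⟩ | ⟨hwf, hfin⟩
  · have := Specialization.wellQuasiOrderedLE_of_wellFounded hwf hfin
    have := (Specialization.subtypeEmbedding A).wellQuasiOrderedLE
    exact f.continuous_symm_of_wellQuasiOrderedLE_specialization hf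
  · have := Specialization.wellQuasiOrderedLE_orderDual_of_wellFounded hwf hfin
    have := (Specialization.subtypeEmbedding A).dual.wellQuasiOrderedLE
    exact f.continuous_symm_of_wellQuasiOrderedLE_specialization_orderDual hf
end
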